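/- Suppose T : C → A satisfies (Ax0), (Ax2), (Ax3) and also the dual axioms (Ax2*) (pullbacks exist in C and A and T preserves them) and (Ax3*) (every fiber has an initial object), so that a functor Min : C → C is defined dually to Max. Then Min ∘ Max = Min and Max ∘ Min = Max, and consequently the restrictions Min : Max(C) → Min(C) and Max : Min(C) → Max(C) are mutually inverse equivalences of categories. -/

import Mathlib

open CategoryTheory Limits

universe v₁ v₂ u₁ u₂

variable {C : Type u₁} [Category.{v₁} C] {A : Type u₂} [Category.{v₂} A]

/-- Axiom (Ax0): every isomorphism `f : T(C) ≅ A'` in `A` lifts to an isomorphism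
`g : C ≅ C'` in `C` with `T(g) = f` (and in particular `T(C') = A'`). -/
def Ax0 (T : C ⥤ A) : Prop :=
  ∀ (X : C) (a' : A) (f : T.obj X ≅ a'), ∃ (X' : C) (h : T.obj X' = a') (g : X ≅ X'),
    T.map g.hom = f.hom ≫ eqToHom h.symm

/-- The data of the functor `Max` of the pylonet formalism: a functor `F : C ⥤ C` together
with a natural transformation `ι : 𝟭 C ⟶ F` such that for every `X`, `F.obj X` lies in the
strict fiber of `T` over `T.obj X`, `T(ι_X) = id`, and `F.obj X` is a terminal object of that
strict fiber (axiom (Ax3)). -/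
structure MaxData (T : C ⥤ A) where
  F : C ⥤ C
  ι : 𝟭 C ⟶ F
  fiber_eq : ∀ X : C, T.obj (F.obj X) = T.obj X
  ι_eq : ∀ X : C, T.map (ι.app X) = eqToHom (fiber_eq X).symm
  terminal : ∀ (X Y : C) (h : T.obj Y = T.obj X),
    ∃! g : Y ⟶ F.obj X, T.map g = eqToHom (h.trans (fiber_eq X).symm)

/-- An object is maximal when the canonical map `ι_X : X ⟶ Max X` is an isomorphism. -/
def Pmax {T : C ⥤ A} (M : MaxData T) : C → Prop := fun X => IsIso (M.ι.app X)

/-- The data of the dual functor `Min`: for every `X`, `F.obj X` is an initial object of the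
strict fiber of `T` over `T.obj X` (axiom (Ax3*)). -/
structure MinData (T : C ⥤ A) where
  F : C ⥤ C
  ι : F ⟶ 𝟭 C
  fiber_eq : ∀ X : C, T.obj (F.obj X) = T.obj X
  ι_eq : ∀ X : C, T.map (ι.app X) = eqToHom (fiber_eq X)
  initial : ∀ (X Y : C) (h : T.obj Y = T.obj X),
    ∃! g : F.obj X ⟶ Y, T.map g = eqToHom ((fiber_eq X).trans h.symm)

/-- An object is minimal when the canonical map `ι_X : Min X ⟶ X` is an isomorphism. -/
def Pmin {T : C ⥤ A} (N : MinData T) : C → Prop := fun X => IsIso (N.ι.app X)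

/-!
A morphism lying over an identity of `A` (a vertical morphism) between two objects that are
both initial in the same strict fibre of `T` is an isomorphism. Since `ι_X : X ⟶ Max X` is
vertical and `Min` preserves vertical morphisms, `Min ι_X : Min X ⟶ Min (Max X)` is such a
morphism, whence `Min ∘ Max ≅ Min`; dually `Max ∘ Min ≅ Max`. On maximal objects `ι` is an
isomorphism, so `Max ∘ Min ≅ Max ≅ 𝟭` there, dually on minimal objects, and full faithfulness of
the inclusions lifts these isomorphisms to the subcategories.
-/

namespace CategoryTheory.IsHomLift

variable (p : C ⥤ A) {S : A} {a b c : C}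

lemma lift_id_of_comp_of_lift_id_right (φ : a ⟶ b) (ψ : b ⟶ c)
    [p.IsHomLift (𝟙 S) (φ ≫ ψ)] [p.IsHomLift (𝟙 S) ψ] : p.IsHomLift (𝟙 S) φ := by
  have hφψ := fac' p (𝟙 S) (φ ≫ ψ)
  have hψ := fac' p (𝟙 S) ψ
  apply of_fac' p (𝟙 S) φ (domain_eq p (𝟙 S) (φ ≫ ψ)) (domain_eq p (𝟙 S) ψ)
  rw [p.map_comp, hψ] at hφψ
  simpa [comp_eqToHom_iff, eqToHom_comp_iff] using hφψ

lemma lift_id_of_comp_of_lift_id_left (φ : a ⟶ b) (ψ : b ⟶ c)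
    [p.IsHomLift (𝟙 S) (φ ≫ ψ)] [p.IsHomLift (𝟙 S) φ] : p.IsHomLift (𝟙 S) ψ := by
  have hφψ := fac' p (𝟙 S) (φ ≫ ψ)
  have hφ := fac' p (𝟙 S) φ
  apply of_fac' p (𝟙 S) ψ (codomain_eq p (𝟙 S) φ) (codomain_eq p (𝟙 S) (φ ≫ ψ))
  rw [p.map_comp, hφ] at hφψ
  simpa [comp_eqToHom_iff, eqToHom_comp_iff] using hφψ

end CategoryTheory.IsHomLift

namespace MinData

variable {T : C ⥤ A} (N : MinData T)

lemma isHomLift_ι (X : C) : T.IsHomLift (𝟙 (T.obj X)) (N.ι.app X) :=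
  IsHomLift.of_fac' T _ _ (N.fiber_eq X) rfl (by simp [N.ι_eq])

lemma exists_isHomLift (X : C) {Y : C} (h : T.obj Y = T.obj X) :
    ∃ g : N.F.obj X ⟶ Y, T.IsHomLift (𝟙 (T.obj Y)) g := by
  obtain ⟨g, hg, -⟩ := N.initial X Y h
  exact ⟨g, IsHomLift.of_fac' T _ _ ((N.fiber_eq X).trans h.symm) rfl (by simp [hg])⟩

lemma hom_ext_of_isHomLift {X Y : C} {S : A} (g₁ g₂ : N.F.obj X ⟶ Y)
    [T.IsHomLift (𝟙 S) g₁] [T.IsHomLift (𝟙 S) g₂] : g₁ = g₂ := by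
  have hY : T.obj Y = T.obj X :=
    (IsHomLift.codomain_eq T (𝟙 S) g₁).trans
      ((IsHomLift.domain_eq T (𝟙 S) g₁).symm.trans (N.fiber_eq X))
  obtain ⟨g, -, hg⟩ := N.initial X Y hY
  rw [hg g₁ (by simp [IsHomLift.fac' T (𝟙 S) g₁]), hg g₂ (by simp [IsHomLift.fac' T (𝟙 S) g₂])]

lemma isIso_of_isHomLift {X W : C} {S : A} (g : N.F.obj X ⟶ N.F.obj W)
    [T.IsHomLift (𝟙 S) g] : IsIso g := by
  have hX := IsHomLift.domain_eq T (𝟙 S) g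
  have hW := IsHomLift.codomain_eq T (𝟙 S) g
  subst hX
  obtain ⟨u, hu⟩ := N.exists_isHomLift W (hW.symm.trans (N.fiber_eq W))
  have : T.IsHomLift (𝟙 (T.obj (N.F.obj X))) (𝟙 (N.F.obj W)) := IsHomLift.id hW
  exact ⟨u, N.hom_ext_of_isHomLift (S := T.obj (N.F.obj X)) _ _,
    N.hom_ext_of_isHomLift (S := T.obj (N.F.obj X)) _ _⟩

lemma isHomLift_map {X Y : C} {S : A} (f : X ⟶ Y) [T.IsHomLift (𝟙 S) f] :
    T.IsHomLift (𝟙 S) (N.F.map f) := by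
  have hX := IsHomLift.domain_eq T (𝟙 S) f
  have hY := IsHomLift.codomain_eq T (𝟙 S) f
  subst hX
  have := N.isHomLift_ι X
  have : T.IsHomLift (𝟙 (T.obj X)) (N.ι.app Y) := hY ▸ N.isHomLift_ι Y
  have : T.IsHomLift (𝟙 (T.obj X)) (N.F.map f ≫ N.ι.app Y) := by
    rw [N.ι.naturality, Functor.id_map]; infer_instance
  exact IsHomLift.lift_id_of_comp_of_lift_id_right T _ (N.ι.app Y)

lemma isIso_map_of_isHomLift {X Y : C} {S : A} (f : X ⟶ Y) [T.IsHomLift (𝟙 S) f] :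
    IsIso (N.F.map f) :=
  have := N.isHomLift_map (S := S) f
  N.isIso_of_isHomLift (S := S) _

lemma pmin_obj (X : C) : Pmin N (N.F.obj X) :=
  have := N.isHomLift_ι (N.F.obj X)
  N.isIso_of_isHomLift (S := T.obj (N.F.obj X)) (N.ι.app (N.F.obj X))

end MinData

namespace MaxData

variable {T : C ⥤ A} (M : MaxData T)

lemma isHomLift_ι (X : C) : T.IsHomLift (𝟙 (T.obj X)) (M.ι.app X) :=
  IsHomLift.of_fac' T _ _ rfl (M.fiber_eq X) (by simp [M.ι_eq])

lemma exists_isHomLift (X : C) {Y : C} (h : T.obj Y = T.obj X) :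
    ∃ g : Y ⟶ M.F.obj X, T.IsHomLift (𝟙 (T.obj Y)) g := by
  obtain ⟨g, hg, -⟩ := M.terminal X Y h
  exact ⟨g, IsHomLift.of_fac' T _ _ rfl ((M.fiber_eq X).trans h.symm) (by simp [hg])⟩

lemma hom_ext_of_isHomLift {X Y : C} {S : A} (g₁ g₂ : Y ⟶ M.F.obj X)
    [T.IsHomLift (𝟙 S) g₁] [T.IsHomLift (𝟙 S) g₂] : g₁ = g₂ := by
  have hY : T.obj Y = T.obj X :=
    (IsHomLift.domain_eq T (𝟙 S) g₁).trans
      ((IsHomLift.codomain_eq T (𝟙 S) g₁).symm.trans (M.fiber_eq X))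
  obtain ⟨g, -, hg⟩ := M.terminal X Y hY
  rw [hg g₁ (by simp [IsHomLift.fac' T (𝟙 S) g₁]), hg g₂ (by simp [IsHomLift.fac' T (𝟙 S) g₂])]

lemma isIso_of_isHomLift {X W : C} {S : A} (g : M.F.obj W ⟶ M.F.obj X)
    [T.IsHomLift (𝟙 S) g] : IsIso g := by
  have hW := IsHomLift.domain_eq T (𝟙 S) g
  have hX := IsHomLift.codomain_eq T (𝟙 S) g
  subst hX
  obtain ⟨u, hu⟩ := M.exists_isHomLift W (hW.symm.trans (M.fiber_eq W))
  have : T.IsHomLift (𝟙 (T.obj (M.F.obj X))) (𝟙 (M.F.obj W)) := IsHomLift.id hW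
  exact ⟨u, M.hom_ext_of_isHomLift (S := T.obj (M.F.obj X)) _ _,
    M.hom_ext_of_isHomLift (S := T.obj (M.F.obj X)) _ _⟩

lemma isHomLift_map {X Y : C} {S : A} (f : X ⟶ Y) [T.IsHomLift (𝟙 S) f] :
    T.IsHomLift (𝟙 S) (M.F.map f) := by
  have hX := IsHomLift.domain_eq T (𝟙 S) f
  have hY := IsHomLift.codomain_eq T (𝟙 S) f
  subst hX
  have := M.isHomLift_ι X
  have : T.IsHomLift (𝟙 (T.obj X)) (M.ι.app Y) := hY ▸ M.isHomLift_ι Y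
  have : T.IsHomLift (𝟙 (T.obj X)) (M.ι.app X ≫ M.F.map f) := by
    rw [← M.ι.naturality, Functor.id_map]; infer_instance
  exact IsHomLift.lift_id_of_comp_of_lift_id_left T (M.ι.app X) _

lemma isIso_map_of_isHomLift {X Y : C} {S : A} (f : X ⟶ Y) [T.IsHomLift (𝟙 S) f] :
    IsIso (M.F.map f) :=
  have := M.isHomLift_map (S := S) f
  M.isIso_of_isHomLift (S := S) _

lemma pmax_obj (X : C) : Pmax M (M.F.obj X) :=
  have := M.isHomLift_ι (M.F.obj X)
  M.isIso_of_isHomLift (S := T.obj (M.F.obj X)) (M.ι.app (M.F.obj X))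

end MaxData

section

variable {T : C ⥤ A} (M : MaxData T) (N : MinData T)

instance isIso_whiskerRight_maxι : IsIso (Functor.whiskerRight M.ι N.F) :=
  have : ∀ X, IsIso ((Functor.whiskerRight M.ι N.F).app X) := fun X =>
    have := M.isHomLift_ι X
    N.isIso_map_of_isHomLift (S := T.obj X) _
  NatIso.isIso_of_isIso_app _

instance isIso_whiskerRight_minι : IsIso (Functor.whiskerRight N.ι M.F) :=
  have : ∀ X, IsIso ((Functor.whiskerRight N.ι M.F).app X) := fun X =>
    have := N.isHomLift_ι X
    M.isIso_map_of_isHomLift (S := T.obj X) _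
  NatIso.isIso_of_isIso_app _

noncomputable def maxCompMinIso : M.F ⋙ N.F ≅ N.F :=
  (asIso (Functor.whiskerRight M.ι N.F)).symm ≪≫ N.F.leftUnitor

noncomputable def minCompMaxIso : N.F ⋙ M.F ≅ M.F :=
  asIso (Functor.whiskerRight N.ι M.F) ≪≫ M.F.leftUnitor

instance MaxData.isIso_whiskerLeft_ι : IsIso ((ObjectProperty.ι (Pmax M)).whiskerLeft M.ι) :=
  have : ∀ X, IsIso (((ObjectProperty.ι (Pmax M)).whiskerLeft M.ι).app X) := fun X => X.property
  NatIso.isIso_of_isIso_app _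

instance MinData.isIso_whiskerLeft_ι : IsIso ((ObjectProperty.ι (Pmin N)).whiskerLeft N.ι) :=
  have : ∀ X, IsIso (((ObjectProperty.ι (Pmin N)).whiskerLeft N.ι).app X) := fun X => X.property
  NatIso.isIso_of_isIso_app _

noncomputable def maximalEquivMinimal :
    ObjectProperty.FullSubcategory (Pmax M) ≌ ObjectProperty.FullSubcategory (Pmin N) :=
  CategoryTheory.Equivalence.mk
    (ObjectProperty.lift _ (ObjectProperty.ι (Pmax M) ⋙ N.F) fun X => N.pmin_obj X.obj)
    (ObjectProperty.lift _ (ObjectProperty.ι (Pmin N) ⋙ M.F) fun X => M.pmax_obj X.obj)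
    (Functor.fullyFaithfulCancelRight (ObjectProperty.ι (Pmax M))
      (Functor.isoWhiskerLeft (ObjectProperty.ι (Pmax M)) (minCompMaxIso M N) ≪≫
        (asIso ((ObjectProperty.ι (Pmax M)).whiskerLeft M.ι)).symm).symm)
    (Functor.fullyFaithfulCancelRight (ObjectProperty.ι (Pmin N))
      (Functor.isoWhiskerLeft (ObjectProperty.ι (Pmin N)) (maxCompMinIso M N) ≪≫
        asIso ((ObjectProperty.ι (Pmin N)).whiskerLeft N.ι)))

end

theorem min_max_equivalence_general (T : C ⥤ A) (M : MaxData T) (N : MinData T) :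
    Nonempty ((M.F ⋙ N.F) ≅ N.F) ∧ Nonempty ((N.F ⋙ M.F) ≅ M.F) ∧
    ∃ (G : ObjectProperty.FullSubcategory (Pmax M) ⥤ ObjectProperty.FullSubcategory (Pmin N))
      (H : ObjectProperty.FullSubcategory (Pmin N) ⥤ ObjectProperty.FullSubcategory (Pmax M)),
      Nonempty (G ⋙ ObjectProperty.ι (Pmin N) ≅
        ObjectProperty.ι (Pmax M) ⋙ N.F) ∧
      Nonempty (H ⋙ ObjectProperty.ι (Pmax M) ≅
        ObjectProperty.ι (Pmin N) ⋙ M.F) ∧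
      Nonempty (G ⋙ H ≅ 𝟭 (ObjectProperty.FullSubcategory (Pmax M))) ∧
      Nonempty (H ⋙ G ≅ 𝟭 (ObjectProperty.FullSubcategory (Pmin N))) :=
  let e := maximalEquivMinimal M N
  ⟨⟨maxCompMinIso M N⟩, ⟨minCompMaxIso M N⟩, e.functor, e.inverse,
    ⟨Iso.refl _⟩, ⟨Iso.refl _⟩, ⟨e.unitIso.symm⟩, ⟨e.counitIso⟩⟩

/-- under (Ax0), (Ax2), (Ax3) and the dual axioms (Ax2*), (Ax3*),
one has `Min ∘ Max = Min` and `Max ∘ Min = Max`, and the restrictions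
`Min : Max(C) → Min(C)` and `Max : Min(C) → Max(C)` are mutually inverse equivalences
of categories. -/
theorem min_max_equivalence (T : C ⥤ A) (hAx0 : Ax0 T)
    [HasPushouts C] [HasPushouts A] [PreservesColimitsOfShape WalkingSpan T]
    [HasPullbacks C] [HasPullbacks A] [PreservesLimitsOfShape WalkingCospan T]
    (M : MaxData T) (N : MinData T) :
    Nonempty ((M.F ⋙ N.F) ≅ N.F) ∧ Nonempty ((N.F ⋙ M.F) ≅ M.F) ∧
    ∃ (G : ObjectProperty.FullSubcategory (Pmax M) ⥤ ObjectProperty.FullSubcategory (Pmin N))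
      (H : ObjectProperty.FullSubcategory (Pmin N) ⥤ ObjectProperty.FullSubcategory (Pmax M)),
      Nonempty (G ⋙ ObjectProperty.ι (Pmin N) ≅
        ObjectProperty.ι (Pmax M) ⋙ N.F) ∧
      Nonempty (H ⋙ ObjectProperty.ι (Pmax M) ≅
        ObjectProperty.ι (Pmin N) ⋙ M.F) ∧
      Nonempty (G ⋙ H ≅ 𝟭 (ObjectProperty.FullSubcategory (Pmax M))) ∧
      Nonempty (H ⋙ G ≅ 𝟭 (ObjectProperty.FullSubcategory (Pmin N))) :=
  min_max_equivalence_general T M N
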